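/- arXiv:1705.04772 — 2 statements merged into one kernel-verified Lean document; each statement's English description precedes it below -/
import Mathlib

section
/- Let p ∈ ℕ, T ∈ ℝ, ε ≥ 0, and let w : ℝ → ℝ be continuously differentiable with w ≥ 0 and supp w ⊆ [−(2p+1)/2, (2p+1)/2]. Let n₂ := #{ j ∈ ℤ : −p ≤ j ≤ p and w' does not vanish identically on [j − 1/2, j + 1/2] }. Let (λ_k)_{k ∈ ℤ} be reals with λ_k ≥ 0 for all k, and set γ(s) := Σ_{k ∈ ℤ} λ_k w(s − k) and γ'(s) := Σ_{k ∈ ℤ} λ_k w'(s − k) (finite sums for each s). Then for every s ∈ ℝ: T² γ(s)² − ε γ'(s)² ≥ Σ_{k ∈ ℤ} λ_k² (T² w(s − k)² − n₂ ε w'(s − k)²). -/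
/-!
Write `a k = λ_k w(s - k)` and `b k = λ_k w'(s - k)`; both have finite support in `k`.
Since `a ≥ 0`, `Σ a_k² ≤ (Σ a_k)²`, which handles the `T²` term. For the `ε` term, Cauchy–Schwarz
over the support of `b` gives `(Σ b_k)² ≤ #supp b · Σ b_k²`. The map `k ↦ round (s - k)` sends the
support of `b` injectively into the cells `[j - 1/2, j + 1/2]` on which `w'` does not vanish, so
`#supp b ≤ n₂`. That these cells lie in `{-p, …, p}` needs `w'` to vanish outside the open interval
`(-(2p+1)/2, (2p+1)/2)`: every zero of `w ≥ 0` is a minimum, so `supp w' ⊆ supp w`, and the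
support of the continuous `w` is open.
-/

open Function Set

lemma Continuous.support_subset_Ioo_of_subset_Icc {f : ℝ → ℝ} (hf : Continuous f) {a b : ℝ}
    (h : support f ⊆ Icc a b) : support f ⊆ Ioo a b := by
  rw [← interior_Icc]
  exact hf.isOpen_support.subset_interior_iff.mpr h

lemma support_deriv_subset_support_of_nonneg {f : ℝ → ℝ} (hf : ∀ x, 0 ≤ f x) :
    support (deriv f) ⊆ support f := by
  intro x hx hfx
  exact hx (IsLocalMin.deriv_eq_zero (Filter.Eventually.of_forall fun y => hfx ▸ hf y))

section Cells

variable {g : ℝ → ℝ} {p : ℕ}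

abbrev activeCells (g : ℝ → ℝ) (p : ℕ) : Set ℤ :=
  {j : ℤ | -(p : ℤ) ≤ j ∧ j ≤ (p : ℤ) ∧ ∃ x ∈ Icc ((j : ℝ) - 1 / 2) ((j : ℝ) + 1 / 2), g x ≠ 0}

lemma activeCells_finite : (activeCells g p).Finite :=
  (finite_Icc (-(p : ℤ)) p).subset fun _ hj => ⟨hj.1, hj.2.1⟩

lemma injective_round_sub (s : ℝ) : Injective fun k : ℤ => round (s - k) := by
  intro k l h
  simpa [round_sub_intCast] using h

lemma round_mem_activeCells
    (hg : support g ⊆ Ioo (-((2 * (p : ℝ) + 1) / 2)) ((2 * (p : ℝ) + 1) / 2))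
    {x : ℝ} (hx : g x ≠ 0) : round x ∈ activeCells g p := by
  obtain ⟨hlo, hhi⟩ := hg hx
  have hround := abs_le.mp (abs_sub_round x)
  refine ⟨?_, ?_, x, ⟨by linarith, by linarith⟩, hx⟩
  · rw [round_eq, Int.le_floor]; push_cast; linarith
  · rw [round_eq, Int.floor_le_iff]; push_cast; linarith

lemma finite_support_comp_sub
    (hg : support g ⊆ Ioo (-((2 * (p : ℝ) + 1) / 2)) ((2 * (p : ℝ) + 1) / 2)) (s : ℝ) :
    (support fun k : ℤ => g (s - k)).Finite :=
  activeCells_finite.of_injOn (fun _ hk => round_mem_activeCells hg hk)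
    (injective_round_sub s).injOn

lemma ncard_support_comp_sub_le
    (hg : support g ⊆ Ioo (-((2 * (p : ℝ) + 1) / 2)) ((2 * (p : ℝ) + 1) / 2)) (s : ℝ) :
    (support fun k : ℤ => g (s - k)).ncard ≤ (activeCells g p).ncard :=
  ncard_le_ncard_of_injOn _ (fun _ hk => round_mem_activeCells hg hk)
    (injective_round_sub s).injOn activeCells_finite

end Cells
section FiniteSupport

variable {ι : Type*} {f : ι → ℝ}

lemma tsum_sq_le_sq_tsum_of_nonneg (hf : (support f).Finite) (h0 : ∀ i, 0 ≤ f i) :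
    ∑' i, f i ^ 2 ≤ (∑' i, f i) ^ 2 := by
  have hsq : support (fun i => f i ^ 2) ⊆ hf.toFinset := by simp
  rw [tsum_eq_sum' hsq, tsum_eq_sum' hf.coe_toFinset.ge]
  exact Finset.sum_sq_le_sq_sum_of_nonneg fun i _ => h0 i

lemma sq_tsum_le_ncard_support_mul_tsum_sq (hf : (support f).Finite) :
    (∑' i, f i) ^ 2 ≤ (support f).ncard * ∑' i, f i ^ 2 := by
  have hsq : support (fun i => f i ^ 2) ⊆ hf.toFinset := by simp
  rw [tsum_eq_sum' hsq, tsum_eq_sum' hf.coe_toFinset.ge, ncard_eq_toFinset_card _ hf]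
  exact sq_sum_le_card_mul_sum_sq

end FiniteSupport

/-- Comparison with a squared Anderson-type potential: for `w ∈ C¹`, `w ≥ 0`,
`supp w ⊆ [−(2p+1)/2, (2p+1)/2]`, `λ_k ≥ 0`, `ε ≥ 0`, and `n₂` the number of
`j ∈ {−p, …, p}` on whose interval `[j − 1/2, j + 1/2]` the derivative `w'` does not
vanish identically, one has
`T² γ(s)² − ε γ'(s)² ≥ Σ_k λ_k² (T² w(s−k)² − n₂ ε w'(s−k)²)`,
where `γ(s) = Σ_k λ_k w(s−k)` and `γ'(s) = Σ_k λ_k w'(s−k)`. -/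
theorem stmt_9 (p : ℕ) (T ε : ℝ) (hε : 0 ≤ ε)
    (w : ℝ → ℝ) (hw1 : ContDiff ℝ 1 w) (hw0 : ∀ s : ℝ, 0 ≤ w s)
    (hsupp : Function.support w ⊆ Set.Icc (-((2 * (p : ℝ) + 1) / 2)) ((2 * (p : ℝ) + 1) / 2))
    (n₂ : ℕ)
    (hn₂ : n₂ = Set.ncard {j : ℤ | -(p : ℤ) ≤ j ∧ j ≤ (p : ℤ) ∧
        ∃ x ∈ Set.Icc ((j : ℝ) - 1 / 2) ((j : ℝ) + 1 / 2), deriv w x ≠ 0})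
    (lam : ℤ → ℝ) (hlam : ∀ k : ℤ, 0 ≤ lam k) :
    ∀ s : ℝ,
      T ^ 2 * (∑' k : ℤ, lam k * w (s - k)) ^ 2
          - ε * (∑' k : ℤ, lam k * deriv w (s - k)) ^ 2 ≥
        ∑' k : ℤ, (lam k) ^ 2 *
          (T ^ 2 * (w (s - k)) ^ 2 - (n₂ : ℝ) * ε * (deriv w (s - k)) ^ 2) := by
  intro s
  have hw : support w ⊆ _ := hw1.continuous.support_subset_Ioo_of_subset_Icc hsupp
  have hdw : support (deriv w) ⊆ _ := (support_deriv_subset_support_of_nonneg hw0).trans hw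
  set a : ℤ → ℝ := fun k => lam k * w (s - k)
  set b : ℤ → ℝ := fun k => lam k * deriv w (s - k)
  have ha : (support a).Finite :=
    (finite_support_comp_sub hw s).subset (support_mul_subset_right _ _)
  have hb_sub : support b ⊆ support fun k : ℤ => deriv w (s - k) := support_mul_subset_right _ _
  have hb : (support b).Finite := (finite_support_comp_sub hdw s).subset hb_sub
  have hcard : ((support b).ncard : ℝ) ≤ n₂ := by
    rw [hn₂]
    exact_mod_cast (ncard_le_ncard hb_sub (finite_support_comp_sub hdw s)).trans
      (ncard_support_comp_sub_le hdw s)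
  have hrhs : ∑' k : ℤ, lam k ^ 2 * (T ^ 2 * w (s - k) ^ 2 - n₂ * ε * deriv w (s - k) ^ 2) =
      T ^ 2 * ∑' k, a k ^ 2 - n₂ * ε * ∑' k, b k ^ 2 := by
    have hsum (f : ℤ → ℝ) (hf : (support f).Finite) : Summable fun k => f k ^ 2 :=
      summable_of_hasFiniteSupport (hf.subset fun k hk => by simpa using hk)
    rw [← tsum_mul_left, ← tsum_mul_left, ← ((hsum a ha).mul_left _).tsum_sub
      ((hsum b hb).mul_left _)]
    congr 1 with k
    ring
  have hA : T ^ 2 * ∑' k, a k ^ 2 ≤ T ^ 2 * (∑' k, a k) ^ 2 :=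
    mul_le_mul_of_nonneg_left
      (tsum_sq_le_sq_tsum_of_nonneg ha fun k => mul_nonneg (hlam k) (hw0 _)) (sq_nonneg T)
  have hB : ε * (∑' k, b k) ^ 2 ≤ n₂ * ε * ∑' k, b k ^ 2 := calc
    ε * (∑' k, b k) ^ 2 ≤ ε * ((support b).ncard * ∑' k, b k ^ 2) :=
      mul_le_mul_of_nonneg_left (sq_tsum_le_ncard_support_mul_tsum_sq hb) hε
    _ ≤ ε * (n₂ * ∑' k, b k ^ 2) := by gcongr
    _ = n₂ * ε * ∑' k, b k ^ 2 := by ring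
  rw [ge_iff_le, hrhs]
  linarith
end

section
/- Let n, m ∈ ℕ and let C₁, …, C_m be Hermitian n × n complex matrices. Then the number of negative eigenvalues (counted with multiplicity) of the Hermitian matrix C₁ + ⋯ + C_m is at most the sum over j = 1, …, m of the number of negative eigenvalues (counted with multiplicity) of C_j. -/
/-!
Let `V` be the span of the eigenvectors of `∑ⱼ Cⱼ` with negative eigenvalues and `W` the subspace
of vectors whose coordinates along the negative eigenvectors of every `Cⱼ` vanish. The quadratic
form `⟪x, (∑ⱼ Cⱼ) x⟫` is negative definite on `V`, but nonnegative on `W`, where each `⟪x, Cⱼ x⟫`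
is. Hence `V ⊓ W = ⊥`, and the number of negative eigenvalues of `∑ⱼ Cⱼ`, which is `dim V`, is at
most the codimension of `W`, which is at most the sum of the numbers of negative eigenvalues of
the `Cⱼ`.
-/

open Finset Module
open scoped InnerProductSpace

theorem Matrix.IsHermitian.toEuclideanLin_eigenvectorBasis {𝕜 n : Type*} [RCLike 𝕜] [Fintype n]
    [DecidableEq n] {A : Matrix n n 𝕜} (hA : A.IsHermitian) (i : n) :
    A.toEuclideanLin (hA.eigenvectorBasis i) = (hA.eigenvalues i : 𝕜) • hA.eigenvectorBasis i := by
  apply WithLp.ofLp_injective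
  rw [Matrix.ofLp_toLpLin, Matrix.toLin'_apply, hA.mulVec_eigenvectorBasis, WithLp.ofLp_smul,
    RCLike.real_smul_eq_coe_smul (K := 𝕜)]

namespace OrthonormalBasis

variable {𝕜 E ι : Type*} [RCLike 𝕜] [NormedAddCommGroup E] [InnerProductSpace 𝕜 E] [Fintype ι]

noncomputable def coordsOn (b : OrthonormalBasis ι 𝕜 E) (p : ι → Prop) :
    E →ₗ[𝕜] {i // p i} → 𝕜 :=
  LinearMap.pi fun i => b.toBasis.coord i

@[simp]
theorem coordsOn_apply (b : OrthonormalBasis ι 𝕜 E) (p : ι → Prop) (x : E) (i : {i // p i}) :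
    b.coordsOn p x i = b.repr x i := by
  simp [coordsOn]

variable {T : E →ₗ[𝕜] E} {b : OrthonormalBasis ι 𝕜 E} {μ : ι → ℝ}

theorem repr_apply_of_eigenbasis (hb : ∀ i, T (b i) = (μ i : 𝕜) • b i) (x : E) (i : ι) :
    b.repr (T x) i = μ i * b.repr x i := by
  classical
  conv_lhs => rw [← b.sum_repr x]
  simp [hb, b.repr_self, Pi.single_apply, RCLike.real_smul_eq_coe_mul, mul_comm]

theorem re_inner_map_self_eq_sum (hb : ∀ i, T (b i) = (μ i : 𝕜) • b i) (x : E) :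
    RCLike.re ⟪x, T x⟫_𝕜 = ∑ i, μ i * ‖b.repr x i‖ ^ 2 := by
  rw [← b.repr.inner_map_map, PiLp.inner_apply, map_sum]
  refine sum_congr rfl fun i _ => ?_
  rw [repr_apply_of_eigenbasis hb, RCLike.inner_apply, mul_assoc, RCLike.mul_conj]
  norm_cast

theorem re_inner_map_self_nonneg_of_mem_ker (hb : ∀ i, T (b i) = (μ i : 𝕜) • b i) {x : E}
    (hx : x ∈ LinearMap.ker (b.coordsOn (μ · < 0))) : 0 ≤ RCLike.re ⟪x, T x⟫_𝕜 := by
  rw [re_inner_map_self_eq_sum hb]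
  refine sum_nonneg fun i _ => ?_
  by_cases hi : μ i < 0
  · simp [show b.repr x i = 0 from congrFun hx ⟨i, hi⟩]
  · exact mul_nonneg (not_lt.1 hi) (sq_nonneg _)

theorem eq_zero_of_re_inner_map_self_nonneg (hb : ∀ i, T (b i) = (μ i : 𝕜) • b i) {x : E}
    (hx : x ∈ LinearMap.ker (b.coordsOn fun i => ¬μ i < 0)) (hT : 0 ≤ RCLike.re ⟪x, T x⟫_𝕜) :
    x = 0 := by
  have hterm_nonpos : ∀ i ∈ univ, μ i * ‖b.repr x i‖ ^ 2 ≤ 0 := fun i _ => by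
    by_cases hi : μ i < 0
    · exact mul_nonpos_of_nonpos_of_nonneg hi.le (sq_nonneg _)
    · simp [show b.repr x i = 0 from congrFun hx ⟨i, hi⟩]
  rw [re_inner_map_self_eq_sum hb] at hT
  have hterm_zero := (sum_eq_zero_iff_of_nonpos hterm_nonpos).1
    (le_antisymm (sum_nonpos hterm_nonpos) hT)
  refine b.repr.injective (PiLp.ext fun i => ?_)
  by_cases hi : μ i < 0
  · simpa [hi.ne] using hterm_zero i (mem_univ i)
  · simpa using congrFun hx ⟨i, hi⟩

theorem card_neg_le_finrank_of_re_inner_nonneg_on_ker (hb : ∀ i, T (b i) = (μ i : 𝕜) • b i)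
    {F : Type*} [AddCommGroup F] [Module 𝕜 F] [FiniteDimensional 𝕜 F] (L : E →ₗ[𝕜] F)
    (hL : ∀ x ∈ LinearMap.ker L, 0 ≤ RCLike.re ⟪x, T x⟫_𝕜) :
    #{i | μ i < 0} ≤ finrank 𝕜 F := by
  classical
  have hinj : Function.Injective (L.prod (b.coordsOn fun i => ¬μ i < 0)) := by
    rw [← LinearMap.ker_eq_bot, LinearMap.ker_prod, Submodule.eq_bot_iff]
    rintro x ⟨hxL, hx⟩
    exact eq_zero_of_re_inner_map_self_nonneg hb hx (hL x hxL)
  have hdim := LinearMap.finrank_le_finrank_of_injective hinj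
  rw [finrank_prod, finrank_fintype_fun_eq_card, Fintype.card_subtype,
    finrank_eq_card_basis b.toBasis, ← card_univ, ← card_filter_add_card_filter_not (s := univ) (p := fun i => μ i < 0)] at hdim
  omega

theorem card_neg_eigenvalues_sum_le {κ : Type*} [Fintype κ] {T : κ → E →ₗ[𝕜] E}
    {b : κ → OrthonormalBasis ι 𝕜 E} {μ : κ → ι → ℝ}
    (hb : ∀ j i, T j (b j i) = (μ j i : 𝕜) • b j i) {c : OrthonormalBasis ι 𝕜 E} {ν : ι → ℝ}
    (hc : ∀ i, (∑ j, T j) (c i) = (ν i : 𝕜) • c i) :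
    #{i | ν i < 0} ≤ ∑ j, #{i | μ j i < 0} := by
  classical
  have key := card_neg_le_finrank_of_re_inner_nonneg_on_ker hc
    (LinearMap.pi fun j => (b j).coordsOn (μ j · < 0)) fun x hx => by
      rw [LinearMap.ker_pi, Submodule.mem_iInf] at hx
      simp only [LinearMap.sum_apply, inner_sum, map_sum]
      exact sum_nonneg fun j _ => re_inner_map_self_nonneg_of_mem_ker (hb j) (hx j)
  rw [finrank_pi_fintype] at key
  simpa only [finrank_fintype_fun_eq_card, Fintype.card_subtype] using key

end OrthonormalBasis

/-- Weyl-type subadditivity of the negative-eigenvalue counting function: the number of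
negative eigenvalues (with multiplicity) of a sum `C₁ + ⋯ + C_m` of Hermitian `n × n`
complex matrices is at most the sum of the numbers of negative eigenvalues of the `C_j`. -/
theorem stmt_15 (n m : ℕ) (C : Fin m → Matrix (Fin n) (Fin n) ℂ)
    (hC : ∀ j, (C j).IsHermitian) :
    (univ.filter fun i : Fin n =>
        (show (∑ j, C j).IsHermitian by
          simp [Matrix.IsHermitian, Matrix.conjTranspose_sum,
            fun j => (hC j).eq]).eigenvalues i < 0).card ≤
      ∑ j, (univ.filter fun i : Fin n => (hC j).eigenvalues i < 0).card :=
  OrthonormalBasis.card_neg_eigenvalues_sum_le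
    (fun j => (hC j).toEuclideanLin_eigenvectorBasis) fun i => by
      rw [← map_sum]
      exact Matrix.IsHermitian.toEuclideanLin_eigenvectorBasis _ i
end
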